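/- Let B(z) = ∏_{k=1}^{n}(z - a_k)/(1 - \bar{a_k}z) be a finite Blaschke product of degree n ≥ 1 and M a Möbius transformation of the unit disc. Then B ∘ M = B on the closed unit disc if and only if M permutes the zero set {a_1, ..., a_n} (with multiplicity) and there exists a point z₀ in the closed disc, not among the a_k, with B(M(z₀)) = B(z₀). -/

import Mathlib

/-!
Disc automorphisms act covariantly on Blaschke factors: `φ_{M w} ∘ M = c_w • φ_w` for a constant
`c_w`. If `M` permutes the zeros of `B`, this gives `B ∘ M = c • B` for a constant `c`, and
`B (M z₀) = B z₀ ≠ 0` forces `c = 1`. Conversely, writing the zeros as `a_k = M r_k`, the same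
identity makes `B ∘ M` a constant multiple of the Blaschke product with zeros `r_k`. Clearing
denominators turns `B ∘ M = B` into a polynomial identity whose roots in the closed disc are the
`r_k` on one side and the `a_k` on the other, so `M` permutes the zeros.
-/

open Complex ComplexConjugate Polynomial

noncomputable def blaschkeFactor (w z : ℂ) : ℂ := (z - w) / (1 - conj w * z)

noncomputable def discMobius (e α z : ℂ) : ℂ := e * blaschkeFactor α z

lemma normSq_one_sub_conj_mul_sub_normSq_sub (w z : ℂ) :
    normSq (1 - conj w * z) - normSq (z - w) = (1 - normSq w) * (1 - normSq z) := by
  simp only [normSq_apply, sub_re, sub_im, mul_re, mul_im, conj_re, conj_im, one_re, one_im]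
  ring

lemma one_sub_conj_mul_ne_zero {w z : ℂ} (hw : ‖w‖ < 1) (hz : ‖z‖ ≤ 1) :
    1 - conj w * z ≠ 0 := by
  refine sub_ne_zero.mpr (ne_of_apply_ne norm (ne_of_gt ?_))
  rw [norm_one, norm_mul, norm_conj]
  exact mul_lt_one_of_nonneg_of_lt_one_left (norm_nonneg w) hw hz

lemma norm_blaschkeFactor_lt_one {w z : ℂ} (hw : ‖w‖ < 1) (hz : ‖z‖ < 1) :
    ‖blaschkeFactor w z‖ < 1 := by
  have hden := one_sub_conj_mul_ne_zero hw hz.le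
  rw [blaschkeFactor, norm_div, div_lt_one (norm_pos_iff.mpr hden), ← sq_lt_sq₀ (norm_nonneg _)
    (norm_nonneg _), ← normSq_eq_norm_sq, ← normSq_eq_norm_sq, ← sub_pos,
    normSq_one_sub_conj_mul_sub_normSq_sub, normSq_eq_norm_sq, normSq_eq_norm_sq]
  have hw2 : ‖w‖ ^ 2 < 1 := pow_lt_one₀ (norm_nonneg w) hw two_ne_zero
  have hz2 : ‖z‖ ^ 2 < 1 := pow_lt_one₀ (norm_nonneg z) hz two_ne_zero
  exact mul_pos (sub_pos.mpr hw2) (sub_pos.mpr hz2)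

lemma norm_discMobius_lt_one {e α z : ℂ} (he : ‖e‖ = 1) (hα : ‖α‖ < 1) (hz : ‖z‖ < 1) :
    ‖discMobius e α z‖ < 1 := by
  rw [discMobius, norm_mul, he, one_mul]
  exact norm_blaschkeFactor_lt_one hα hz

lemma conj_mul_self_of_norm_eq_one {e : ℂ} (he : ‖e‖ = 1) : conj e * e = 1 := by
  rw [conj_mul', he]; norm_num

lemma discMobius_discMobius_inv {e α w : ℂ} (he : ‖e‖ = 1) (hα : ‖α‖ < 1) (hw : ‖w‖ < 1) :
    discMobius e α (discMobius (conj e) (-(e * α)) w) = w := by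
  have hee := conj_mul_self_of_norm_eq_one he
  have hα' : ‖-(e * α)‖ < 1 := by rwa [norm_neg, norm_mul, he, one_mul]
  have hD := one_sub_conj_mul_ne_zero hα' hw.le
  set N := discMobius (conj e) (-(e * α)) w with hNdef
  have hN : N * (1 - conj (-(e * α)) * w) = conj e * w + α := by
    rw [hNdef, discMobius, blaschkeFactor, mul_div_assoc', div_mul_cancel₀ _ hD]
    linear_combination α * hee
  have hN' : 1 - conj α * N ≠ 0 :=
    one_sub_conj_mul_ne_zero hα (norm_discMobius_lt_one (by rwa [norm_conj]) hα' hw).le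
  rw [discMobius, blaschkeFactor, mul_div_assoc', div_eq_iff hN']
  simp only [map_neg, map_mul] at hN
  linear_combination e * hN + (w - conj α * w * N) * hee

noncomputable def discMobiusMultiplier (e α w : ℂ) : ℂ :=
  e * (1 - α * conj w) / (1 - conj α * w)

lemma blaschkeFactor_discMobius {e α w z : ℂ} (he : ‖e‖ = 1) (hα : ‖α‖ < 1) (hw : ‖w‖ < 1)
    (hz : ‖z‖ ≤ 1) :
    blaschkeFactor (discMobius e α w) (discMobius e α z) =
      discMobiusMultiplier e α w * blaschkeFactor w z := by
  have hee := conj_mul_self_of_norm_eq_one he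
  have hDz := one_sub_conj_mul_ne_zero hα hz
  have hDw := one_sub_conj_mul_ne_zero hα hw.le
  have hDw' : 1 - α * conj w ≠ 0 := by
    simpa [mul_comm] using (map_ne_zero (starRingEnd ℂ)).mpr hDw
  have hwz := one_sub_conj_mul_ne_zero hw hz
  have hαα := one_sub_conj_mul_ne_zero hα hα.le
  -- `field_simp` needs some of the denominators in both orders
  have hDz' : 1 - z * conj α ≠ 0 := mul_comm (conj α) z ▸ hDz
  have hwα : 1 - conj w * α ≠ 0 := mul_comm α (conj w) ▸ hDw'
  have hnum : discMobius e α z - discMobius e α w =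
      e * (z - w) * (1 - conj α * α) / ((1 - conj α * z) * (1 - conj α * w)) := by
    simp only [discMobius, blaschkeFactor]
    field_simp
    ring
  have hden : 1 - conj (discMobius e α w) * discMobius e α z =
      (1 - conj α * α) * (1 - conj w * z) / ((1 - α * conj w) * (1 - conj α * z)) := by
    simp only [discMobius, blaschkeFactor, map_mul, map_div₀, map_sub, map_one, conj_conj]
    field_simp
    linear_combination (α - z) * (conj w - conj α) * hee
  rw [blaschkeFactor, hnum, hden, discMobiusMultiplier, blaschkeFactor]
  field_simp

noncomputable def blaschkeProduct (s : Multiset ℂ) (z : ℂ) : ℂ :=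
  (s.map (blaschkeFactor · z)).prod

lemma blaschkeProduct_ne_zero {s : Multiset ℂ} {z : ℂ} (hs : ∀ w ∈ s, ‖w‖ < 1) (hz : ‖z‖ ≤ 1)
    (hzs : z ∉ s) : blaschkeProduct s z ≠ 0 := by
  refine Multiset.prod_ne_zero fun h => ?_
  obtain ⟨w, hw, hw0⟩ := Multiset.mem_map.mp h
  refine div_ne_zero (sub_ne_zero.mpr ?_) (one_sub_conj_mul_ne_zero (hs w hw) hz) hw0
  rintro rfl
  exact hzs hw

lemma blaschkeProduct_map_discMobius {e α z : ℂ} {s : Multiset ℂ} (he : ‖e‖ = 1) (hα : ‖α‖ < 1)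
    (hs : ∀ w ∈ s, ‖w‖ < 1) (hz : ‖z‖ ≤ 1) :
    blaschkeProduct (s.map (discMobius e α)) (discMobius e α z) =
      (s.map (discMobiusMultiplier e α)).prod * blaschkeProduct s z := by
  rw [blaschkeProduct, blaschkeProduct, Multiset.map_map, ← Multiset.prod_map_mul]
  exact congrArg _ (Multiset.map_congr rfl fun w hw => blaschkeFactor_discMobius he hα (hs w hw) hz)

noncomputable def blaschkeNumerator (s : Multiset ℂ) : ℂ[X] := (s.map fun w => X - C w).prod

noncomputable def blaschkeDenominator (s : Multiset ℂ) : ℂ[X] :=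
  (s.map fun w => 1 - C (conj w) * X).prod

lemma blaschkeProduct_eq_eval_div (s : Multiset ℂ) (z : ℂ) :
    blaschkeProduct s z = (blaschkeNumerator s).eval z / (blaschkeDenominator s).eval z := by
  simp [blaschkeProduct, blaschkeNumerator, blaschkeDenominator, eval_multiset_prod,
    Multiset.map_map, ← Multiset.prod_map_div, blaschkeFactor]

lemma eval_blaschkeDenominator_ne_zero {s : Multiset ℂ} {z : ℂ} (hs : ∀ w ∈ s, ‖w‖ < 1)
    (hz : ‖z‖ ≤ 1) : (blaschkeDenominator s).eval z ≠ 0 := by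
  rw [blaschkeDenominator, eval_multiset_prod]
  refine Multiset.prod_ne_zero fun h => ?_
  obtain ⟨w, hw, hw0⟩ := Multiset.mem_map.mp h
  simp only [Multiset.mem_map] at hw
  obtain ⟨v, hv, rfl⟩ := hw
  simp only [eval_sub, eval_one, eval_mul, eval_C, eval_X] at hw0
  exact one_sub_conj_mul_ne_zero (hs v hv) hz hw0

lemma filter_roots_C_mul_numerator_mul_denominator {c : ℂ} {s t : Multiset ℂ} (hc : c ≠ 0)
    (hs : ∀ w ∈ s, ‖w‖ < 1) (ht : ∀ w ∈ t, ‖w‖ < 1) :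
    (C c * blaschkeNumerator s * blaschkeDenominator t).roots.filter (‖·‖ ≤ 1) = s := by
  have hD := eval_blaschkeDenominator_ne_zero ht (z := 0) (by simp)
  have hD0 : blaschkeDenominator t ≠ 0 := fun h => hD (by rw [h, eval_zero])
  have hN0 : blaschkeNumerator s ≠ 0 := Multiset.prod_ne_zero (by simp [X_sub_C_ne_zero])
  rw [roots_mul (mul_ne_zero (mul_ne_zero (C_ne_zero.mpr hc) hN0) hD0), roots_C_mul _ hc,
    blaschkeNumerator, roots_multiset_prod_X_sub_C, Multiset.filter_add,
    Multiset.filter_eq_self.mpr fun w hw => (hs w hw).le,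
    Multiset.filter_eq_nil.mpr fun w hw hw1 => eval_blaschkeDenominator_ne_zero ht hw1
      ((mem_roots hD0).mp hw), add_zero]

lemma eq_of_mul_blaschkeProduct_eq {c : ℂ} {s t : Multiset ℂ} (hs : ∀ w ∈ s, ‖w‖ < 1)
    (ht : ∀ w ∈ t, ‖w‖ < 1) (h : ∀ z, ‖z‖ ≤ 1 → c * blaschkeProduct s z = blaschkeProduct t z) :
    s = t := by
  have hc : c ≠ 0 := by
    rintro rfl
    have h1 : (1 : ℂ) ∉ t := fun h1 => by simpa using ht 1 h1
    exact blaschkeProduct_ne_zero ht (by simp) h1 (by simpa using (h 1 (by simp)).symm)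
  have hpoly : C c * blaschkeNumerator s * blaschkeDenominator t =
      C 1 * blaschkeNumerator t * blaschkeDenominator s := by
    refine eq_of_infinite_eval_eq _ _ ((infinite_of_mem_nhds (0 : ℂ)
      (Metric.closedBall_mem_nhds 0 one_pos)).mono fun z hz => ?_)
    have hz : ‖z‖ ≤ 1 := by simpa using hz
    have := h z hz
    rw [blaschkeProduct_eq_eval_div, blaschkeProduct_eq_eval_div, mul_div_assoc',
      div_eq_div_iff (eval_blaschkeDenominator_ne_zero hs hz)
        (eval_blaschkeDenominator_ne_zero ht hz)] at this
    simp only [Set.mem_ofPred_eq, eval_mul, eval_C, one_mul, this]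
  rw [← filter_roots_C_mul_numerator_mul_denominator hc hs ht, hpoly,
    filter_roots_C_mul_numerator_mul_denominator one_ne_zero ht hs]

theorem map_discMobius_eq_of_blaschkeProduct_comp_eq {e α : ℂ} {s : Multiset ℂ} (he : ‖e‖ = 1)
    (hα : ‖α‖ < 1) (hs : ∀ w ∈ s, ‖w‖ < 1)
    (h : ∀ z, ‖z‖ ≤ 1 → blaschkeProduct s (discMobius e α z) = blaschkeProduct s z) :
    s.map (discMobius e α) = s := by
  set r := s.map (discMobius (conj e) (-(e * α)))
  have hr : ∀ w ∈ r, ‖w‖ < 1 := by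
    simp only [r, Multiset.mem_map, forall_exists_index, and_imp, forall_apply_eq_imp_iff₂]
    exact fun w hw => norm_discMobius_lt_one (by rwa [norm_conj])
      (by rwa [norm_neg, norm_mul, he, one_mul]) (hs w hw)
  have hrs : r.map (discMobius e α) = s := by
    rw [Multiset.map_map]
    exact (Multiset.map_congr rfl fun w hw => discMobius_discMobius_inv he hα (hs w hw)).trans
      (Multiset.map_id s)
  have hsr : r = s := by
    refine eq_of_mul_blaschkeProduct_eq
      (c := (r.map (discMobiusMultiplier e α)).prod) hr hs fun z hz => ?_
    rw [← h z hz, ← blaschkeProduct_map_discMobius he hα hr hz, hrs]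
  exact hsr ▸ hrs

theorem blaschkeProduct_comp_eq_of_map_discMobius_eq {e α z₀ : ℂ} {s : Multiset ℂ}
    (he : ‖e‖ = 1) (hα : ‖α‖ < 1) (hs : ∀ w ∈ s, ‖w‖ < 1) (hperm : s.map (discMobius e α) = s)
    (hz₀ : ‖z₀‖ ≤ 1) (hz₀s : z₀ ∉ s)
    (h₀ : blaschkeProduct s (discMobius e α z₀) = blaschkeProduct s z₀) {z : ℂ} (hz : ‖z‖ ≤ 1) :
    blaschkeProduct s (discMobius e α z) = blaschkeProduct s z := by
  have hcomp : ∀ z, ‖z‖ ≤ 1 → blaschkeProduct s (discMobius e α z) =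
      (s.map (discMobiusMultiplier e α)).prod * blaschkeProduct s z :=
    fun z hz => by conv_lhs => rw [← hperm, blaschkeProduct_map_discMobius he hα hs hz]
  have hunit : (s.map (discMobiusMultiplier e α)).prod = 1 := by
    refine mul_right_cancel₀ (blaschkeProduct_ne_zero hs hz₀ hz₀s) ?_
    rw [← hcomp z₀ hz₀, h₀, one_mul]
  rw [hcomp z hz, hunit, one_mul]

theorem invariance_iff_permutes_zeros_general (n : ℕ) (a : Fin n → ℂ)
    (ha : ∀ k, ‖a k‖ < 1) (B : ℂ → ℂ)
    (hB : ∀ z, B z = ∏ k, (z - a k) / (1 - (starRingEnd ℂ) (a k) * z))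
    (e α : ℂ) (he : ‖e‖ = 1) (hα : ‖α‖ < 1) (M : ℂ → ℂ)
    (hM : ∀ z, M z = e * (z - α) / (1 - (starRingEnd ℂ) α * z)) :
    (∀ z : ℂ, ‖z‖ ≤ 1 → B (M z) = B z) ↔
      (Multiset.map M (↑(List.ofFn a) : Multiset ℂ) = (↑(List.ofFn a) : Multiset ℂ) ∧
        ∃ z₀ : ℂ, ‖z₀‖ ≤ 1 ∧ (∀ k, z₀ ≠ a k) ∧ B (M z₀) = B z₀) := by
  have hM' : M = discMobius e α :=
    funext fun z => by rw [hM, discMobius, blaschkeFactor, mul_div_assoc]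
  have hB' : B = blaschkeProduct (List.ofFn a) := funext fun z => by
    rw [hB, blaschkeProduct, ← Fin.univ_val_map, Multiset.map_map]; rfl
  have hs : ∀ w ∈ (List.ofFn a : Multiset ℂ), ‖w‖ < 1 := by
    simpa [List.mem_ofFn] using ha
  subst hM' hB'
  constructor
  · intro h
    refine ⟨map_discMobius_eq_of_blaschkeProduct_comp_eq he hα hs h, 1, by simp, fun k hk => ?_,
      h 1 (by simp)⟩
    simpa [← hk] using ha k
  · rintro ⟨hperm, z₀, hz₀, hz₀a, h₀⟩ z hz
    exact blaschkeProduct_comp_eq_of_map_discMobius_eq he hα hs hperm hz₀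
      (by simpa [List.mem_ofFn, eq_comm] using hz₀a) h₀ hz

/-- `B ∘ M = B` on the closed unit disc iff `M` permutes the zero set of `B`
(with multiplicity) and `B ∘ M` agrees with `B` at one extra point of the
closed disc which is not a zero of `B`. -/
theorem invariance_iff_permutes_zeros (n : ℕ) (hn : 1 ≤ n) (a : Fin n → ℂ)
    (ha : ∀ k, ‖a k‖ < 1) (B : ℂ → ℂ)
    (hB : ∀ z, B z = ∏ k, (z - a k) / (1 - (starRingEnd ℂ) (a k) * z))
    (e α : ℂ) (he : ‖e‖ = 1) (hα : ‖α‖ < 1) (M : ℂ → ℂ)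
    (hM : ∀ z, M z = e * (z - α) / (1 - (starRingEnd ℂ) α * z)) :
    (∀ z : ℂ, ‖z‖ ≤ 1 → B (M z) = B z) ↔
      (Multiset.map M (↑(List.ofFn a) : Multiset ℂ) = (↑(List.ofFn a) : Multiset ℂ) ∧
        ∃ z₀ : ℂ, ‖z₀‖ ≤ 1 ∧ (∀ k, z₀ ≠ a k) ∧ B (M z₀) = B z₀) :=
  invariance_iff_permutes_zeros_general n a ha B hB e α he hα M hM
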